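/- Let 0 < α < 2, −1 < s ≤ 1 with |s| > α/2, and fix ω with απ/2 < ω < min{|s|, α}·π. Then for every η ≥ 0 and every ζ on the contour C_ω (consisting of the rays arg ζ = ±ω with |ζ| ≥ 1 and the arc |ζ| = 1, |arg ζ| ≤ ω), one has |ζ − η e^{iπs}| ≥ |sin(π|s| − ω)|. -/

import Mathlib

/-!
Write `ζ = r e^{iθ}` with `r ≥ 1` and `|θ| ≤ ω`. The angle between `ζ` and the ray `arg z = πs`
is at least `a = π|s| - ω` (and at most `2π - a`), so by the law of cosines
`|ζ - η e^{iπs}|² ≥ r² + η² - 2rη cos a = (η - r cos a)² + (r sin a)² ≥ sin² a`.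
-/

open Real Complex

theorem Real.cos_le_cos_of_le_abs_of_abs_le {a t : ℝ} (ha : 0 ≤ a) (hat : a ≤ |t|)
    (hta : |t| ≤ 2 * π - a) : cos t ≤ cos a := by
  rw [← cos_abs t]
  rcases le_or_gt |t| π with h | h
  · exact cos_le_cos_of_nonneg_of_le_pi ha h hat
  · rw [← cos_two_pi_sub]
    exact cos_le_cos_of_nonneg_of_le_pi ha (by linarith) (by linarith)

theorem Complex.norm_sub_ofReal_mul_exp_sq (z : ℂ) (η φ : ℝ) :
    ‖z - η * exp (φ * I)‖ ^ 2 = ‖z‖ ^ 2 + η ^ 2 - 2 * ‖z‖ * η * Real.cos (φ - arg z) := by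
  rw [Complex.sq_norm, normSq_apply, Real.cos_sub]
  simp only [sub_re, sub_im, re_ofReal_mul, im_ofReal_mul, exp_ofReal_mul_I_re,
    exp_ofReal_mul_I_im]
  rw [← norm_mul_cos_arg z, ← norm_mul_sin_arg z]
  linear_combination ‖z‖ ^ 2 * Real.sin_sq_add_cos_sq (arg z) + η ^ 2 * Real.sin_sq_add_cos_sq φ

theorem Real.sq_mul_sin_le (r η a : ℝ) :
    (r * sin a) ^ 2 ≤ r ^ 2 + η ^ 2 - 2 * r * η * cos a := by
  nlinarith [sq_nonneg (η - r * cos a), sin_sq_add_cos_sq a]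

theorem Complex.abs_sin_abs_sub_le_norm_sub_ofReal_mul_exp {ζ : ℂ} {ω φ η : ℝ}
    (hζ : 1 ≤ ‖ζ‖) (hargζ : |arg ζ| ≤ ω) (hφ : |φ| ≤ π) (hωφ : ω ≤ |φ|) (hη : 0 ≤ η) :
    |Real.sin (|φ| - ω)| ≤ ‖ζ - η * exp (φ * I)‖ := by
  set a := |φ| - ω
  have hangle_lower : a ≤ |φ - arg ζ| := by
    linarith [abs_sub_abs_le_abs_sub φ (arg ζ)]
  have hangle_upper : |φ - arg ζ| ≤ 2 * π - a := by
    linarith [abs_sub φ (arg ζ)]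
  have hcos : Real.cos (φ - arg ζ) ≤ Real.cos a :=
    cos_le_cos_of_le_abs_of_abs_le (by linarith) hangle_lower hangle_upper
  have hsq : Real.sin a ^ 2 ≤ ‖ζ - η * exp (φ * I)‖ ^ 2 :=
    calc Real.sin a ^ 2 ≤ (‖ζ‖ * Real.sin a) ^ 2 := by
          rw [mul_pow]
          exact le_mul_of_one_le_left (sq_nonneg _) (one_le_pow₀ hζ)
      _ ≤ ‖ζ‖ ^ 2 + η ^ 2 - 2 * ‖ζ‖ * η * Real.cos a := sq_mul_sin_le ‖ζ‖ η a
      _ ≤ ‖ζ‖ ^ 2 + η ^ 2 - 2 * ‖ζ‖ * η * Real.cos (φ - arg ζ) := by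
          nlinarith [mul_nonneg (norm_nonneg ζ) hη]
      _ = ‖ζ - η * exp (φ * I)‖ ^ 2 := (norm_sub_ofReal_mul_exp_sq ζ η φ).symm
  simpa using sq_le_sq.mp hsq

theorem stmt1_general (α s ω : ℝ) (hα : 0 < α)
    (hs1 : -1 < s) (hs2 : s ≤ 1)
    (hω1 : α * π / 2 < ω) (hω2 : ω < min |s| α * π)
    (η : ℝ) (hη : 0 ≤ η) (ζ : ℂ)
    (hζ : (‖ζ‖ = 1 ∧ |ζ.arg| ≤ ω) ∨
          (1 ≤ ‖ζ‖ ∧ (ζ.arg = ω ∨ ζ.arg = -ω))) :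
    |Real.sin (π * |s| - ω)| ≤
      ‖ζ - (η : ℂ) * Complex.exp (π * s * Complex.I)‖ := by
  have hω : 0 ≤ ω := by nlinarith [pi_pos]
  have hπs : |π * s| = π * |s| := by rw [abs_mul, abs_of_pos pi_pos]
  have hs : |s| ≤ 1 := abs_le.mpr ⟨hs1.le, hs2⟩
  have hωs : ω ≤ π * |s| := by nlinarith [min_le_left |s| α, pi_pos]
  obtain ⟨hnorm, harg⟩ : 1 ≤ ‖ζ‖ ∧ |ζ.arg| ≤ ω := by
    rcases hζ with ⟨hnorm, harg⟩ | ⟨hnorm, harg | harg⟩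
    · exact ⟨hnorm.ge, harg⟩
    · exact ⟨hnorm, by rw [harg, abs_of_nonneg hω]⟩
    · exact ⟨hnorm, by rw [harg, abs_neg, abs_of_nonneg hω]⟩
  rw [← hπs]
  exact_mod_cast abs_sin_abs_sub_le_norm_sub_ofReal_mul_exp hnorm harg
    (by rw [hπs]; nlinarith [pi_pos]) (hπs ▸ hωs) hη

/-- Lower bound on the distance from a point `η e^{iπs}` on the ray `arg z = πs`
to the Hankel contour `C_ω`. -/
theorem stmt1 (α s ω : ℝ) (hα : 0 < α) (hα2 : α < 2)
    (hs1 : -1 < s) (hs2 : s ≤ 1) (hs3 : α / 2 < |s|)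
    (hω1 : α * π / 2 < ω) (hω2 : ω < min |s| α * π)
    (η : ℝ) (hη : 0 ≤ η) (ζ : ℂ)
    (hζ : (‖ζ‖ = 1 ∧ |ζ.arg| ≤ ω) ∨
          (1 ≤ ‖ζ‖ ∧ (ζ.arg = ω ∨ ζ.arg = -ω))) :
    |Real.sin (π * |s| - ω)| ≤
      ‖ζ - (η : ℂ) * Complex.exp (π * s * Complex.I)‖ :=
  stmt1_general α s ω hα hs1 hs2 hω1 hω2 η hη ζ hζ
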